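/- arXiv:1909.09352 — 3 statements merged into one kernel-verified Lean document; each statement's English description precedes it below -/
import Mathlib

section
/- Let J be a transitive relation on a set M, S ⊆ M, and let d : M × M → ℝ be a function satisfying the reverse triangle inequality d(p,r) + d(r,q) ≤ d(p,q) whenever (p,r) ∈ J and (r,q) ∈ J. Define d_S(q) = sup { d(r,q) : r ∈ S, (r,q) ∈ J } for q in the 'future' of S and d_S(p) = −sup { d(p,r) : r ∈ S, (p,r) ∈ J } for p in the 'past' of S. Then for p, q in the future of S with (p,q) ∈ J, one has d_S(q) − d_S(p) ≥ d(p,q). -/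
theorem csSup_add_le_csSup_of_forall_exists_le {α : Type*} [ConditionallyCompleteLattice α]
    [AddGroup α] [AddRightMono α] {A B : Set α} (hA : A.Nonempty) (hB : BddAbove B) {c : α}
    (h : ∀ a ∈ A, ∃ b ∈ B, a + c ≤ b) :
    sSup A + c ≤ sSup B := by
  rw [← le_sub_iff_add_le]
  refine csSup_le hA fun a ha => ?_
  obtain ⟨b, hb, hab⟩ := h a ha
  rw [le_sub_iff_add_le]
  exact hab.trans (le_csSup hB hb)

/-- Proposition 2.8, first case: anti-Lipschitz property of the signed distance
in the future of `S`. -/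
theorem stmt2 {M : Type*} (J : M → M → Prop) (htrans : Transitive J)
    (S : Set M) (d : M → M → ℝ)
    (hrev : ∀ p r q, J p r → J r q → d p r + d r q ≤ d p q)
    (dS : M → ℝ)
    (hdS : ∀ q, (∃ r ∈ S, J r q) →
      dS q = sSup {x : ℝ | ∃ r ∈ S, J r q ∧ d r q = x})
    (hbdd : ∀ q, (∃ r ∈ S, J r q) →
      BddAbove {x : ℝ | ∃ r ∈ S, J r q ∧ d r q = x})
    (p q : M) (hp : ∃ r ∈ S, J r p) (hq : ∃ r ∈ S, J r q) (hpq : J p q) :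
    dS q - dS p ≥ d p q := by
  rw [hdS q hq, hdS p hp, ge_iff_le, le_sub_iff_add_le']
  obtain ⟨r₀, hr₀S, hr₀p⟩ := hp
  refine csSup_add_le_csSup_of_forall_exists_le ?_ (hbdd q hq) ?_
  · exact ⟨d r₀ p, r₀, hr₀S, hr₀p, rfl⟩
  -- each `r ∈ S` in the past of `p` is in the past of `q`, and `d r p + d p q ≤ d r q`
  · rintro _ ⟨r, hrS, hrp, rfl⟩
    refine ⟨d r q, ?_, hrev r p q hrp hpq⟩
    exact ⟨r, hrS, htrans hrp hpq, rfl⟩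
end

section
/- Let σ : ℝ → ℝ be differentiable with σ' increasing and σ'(s) > 2·max(sup_{[s,s+1]} ε⁻¹, 1) for all s, where ε : ℝ → (0,∞) is continuous. If t, τ ∈ ℝ satisfy |σ(τ) − σ(t)| < 2, then |τ − t| < ε(t). -/
/-!
Because `σ'` is increasing, `σ b - σ a ≥ σ'(a) (b - a)` for `a ≤ b`, so a jump of `σ` smaller
than `M` over `[a, b]` forces `b - a < M / σ'(a)`. If `t ≤ τ`, the bound `σ'(t) > 2 / ε(t)` gives
`τ - t < ε(t)` directly. If `τ < t`, the cruder bound `σ'(τ) > 2` first gives `t - τ < 1`; then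
`t ∈ [τ, τ + 1]`, so `σ'(τ) > 2 / ε(t)` and again `t - τ < ε(t)`.
-/

open Set

lemma deriv_mul_sub_le_sub_of_monotone_deriv {σ : ℝ → ℝ} (hσ : Differentiable ℝ σ)
    (hmono : Monotone (deriv σ)) {a b : ℝ} (hab : a ≤ b) :
    deriv σ a * (b - a) ≤ σ b - σ a :=
  (convex_Ici a).mul_sub_le_image_sub_of_le_deriv hσ.continuous.continuousOn
    hσ.differentiableOn (fun _ hx => hmono (interior_subset hx)) a self_mem_Ici b hab hab

lemma sub_lt_of_div_lt_deriv {σ : ℝ → ℝ} (hσ : Differentiable ℝ σ)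
    (hmono : Monotone (deriv σ)) {a b e M : ℝ} (hab : a ≤ b) (he : 0 < e) (hM : 0 ≤ M)
    (hd : M / e < deriv σ a) (hclose : σ b - σ a < M) : b - a < e := by
  rw [div_lt_iff₀ he] at hd
  have hd_pos : 0 < deriv σ a := pos_of_mul_pos_left (hM.trans_lt hd) he.le
  by_contra! hfar
  have := deriv_mul_sub_le_sub_of_monotone_deriv hσ hmono hab
  nlinarith [mul_le_mul_of_nonneg_left hfar hd_pos.le]

lemma two_div_lt_deriv_of_mem_Icc {ε σ : ℝ → ℝ} (hεc : Continuous ε) (hεpos : ∀ s, 0 < ε s)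
    (hbig : ∀ s : ℝ,
      2 * max (sSup ((fun x => (ε x)⁻¹) '' Icc s (s + 1))) 1 < deriv σ s)
    {s x : ℝ} (hx : x ∈ Icc s (s + 1)) : 2 / ε x < deriv σ s := by
  have hinv : Continuous (fun x => (ε x)⁻¹) := hεc.inv₀ fun x => (hεpos x).ne'
  have hle : (ε x)⁻¹ ≤ sSup ((fun x => (ε x)⁻¹) '' Icc s (s + 1)) :=
    le_csSup (isCompact_Icc.image hinv).bddAbove (mem_image_of_mem _ hx)
  rw [div_eq_mul_inv]
  linarith [hbig s, le_max_left (sSup ((fun x => (ε x)⁻¹) '' Icc s (s + 1))) 1]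

/-- Key estimate in Theorem 2.22: if `σ'` is increasing and
`σ'(s) > 2·max(sup_{[s,s+1]} ε⁻¹, 1)` for all `s`, then `|σ(τ) - σ(t)| < 2`
implies `|τ - t| < ε(t)`. -/
theorem stmt6 (ε : ℝ → ℝ) (hεc : Continuous ε) (hεpos : ∀ s, 0 < ε s)
    (σ : ℝ → ℝ) (hσ : Differentiable ℝ σ) (hmono : Monotone (deriv σ))
    (hbig : ∀ s : ℝ,
      2 * max (sSup ((fun x => (ε x)⁻¹) '' Set.Icc s (s + 1))) 1 < deriv σ s)
    (t τ : ℝ) (hclose : |σ τ - σ t| < 2) :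
    |τ - t| < ε t := by
  obtain ⟨hlow, hhigh⟩ := abs_lt.mp hclose
  have hgap : ∀ {a b}, a ≤ b → 2 / ε t < deriv σ a → σ b - σ a < 2 → b - a < ε t :=
    fun hab => sub_lt_of_div_lt_deriv hσ hmono hab (hεpos t) zero_le_two
  rw [abs_sub_lt_iff]
  rcases le_or_gt t τ with htτ | hτt
  · have hτ_near : τ - t < ε t :=
      hgap htτ (two_div_lt_deriv_of_mem_Icc hεc hεpos hbig ⟨le_rfl, by linarith⟩) hhigh
    exact ⟨hτ_near, by linarith [hεpos t]⟩
  · have htwo : 2 / 1 < deriv σ τ := by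
      linarith [hbig τ, le_max_right (sSup ((fun x => (ε x)⁻¹) '' Icc τ (τ + 1))) 1]
    have hunit : t - τ < 1 :=
      sub_lt_of_div_lt_deriv hσ hmono hτt.le one_pos zero_le_two htwo (by linarith)
    have ht_near : t - τ < ε t :=
      hgap hτt.le (two_div_lt_deriv_of_mem_Icc hεc hεpos hbig ⟨hτt.le, by linarith⟩)
        (by linarith)
    exact ⟨by linarith [hεpos t], ht_near⟩
end

section
/- Let J ⊆ M × M be a closed preorder on a topological space M (reflexive, transitive, closed as a subset of M × M), with M second countable and locally compact. Let A be a closed J-past set and B a closed J-future set with A ∩ B = ∅. Then there exists a continuous J-isotone function τ : M → [0,1] with τ⁻¹(0) = A and τ⁻¹(1) = B. -/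
/-!
Turn `J` into a preorder, so that `J` being closed says that the order is closed, past sets are
lower sets and future sets are upper sets.

The key point is ordered normality: a closed lower set and a disjoint closed upper set have
disjoint open lower and upper neighbourhoods. Since the order is closed, the lower closure of a
compact set is closed, so the closed lower set can be enlarged by the lower closure of a compact
neighbourhood of its trace on a compact set, while staying disjoint from the upper set; doing this
alternately on both sides along a compact exhaustion makes both sets open in the limit.

With ordered normality, the dyadic Urysohn construction can be run through lower sets only, and
produces a continuous monotone function which is `0` on the lower set and `1` on the upper set.
A countable sum of such functions, separating `A` from `Ici x` for countably many `x ∉ A`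
(second countability), has zero set exactly `A`; doing the same for `B` in the dual order gives
an antitone `h` with zero set `B`, and `τ = g / (g + h)` is the required function.
-/

open Set Filter Topology TopologicalSpace

instance {X : Type*} [TopologicalSpace X] [h : LocallyCompactSpace X] : LocallyCompactSpace Xᵒᵈ :=
  h

theorem exists_monotone_seq_of_forall_exists {α : Type*} [Preorder α] {Q : α → Prop}
    {R : ℕ → α → α → Prop} {a : α} (ha : Q a) (h : ∀ n a, Q a → ∃ b, Q b ∧ a ≤ b ∧ R n a b) :
    ∃ f : ℕ → α, f 0 = a ∧ Monotone f ∧ (∀ n, Q (f n)) ∧ ∀ n, R n (f n) (f (n + 1)) := by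
  choose! g hgQ hgle hgR using h
  let f : ℕ → α := fun n => Nat.rec a g n
  have hfQ : ∀ n, Q (f n) := fun n => Nat.rec ha (fun n ih => hgQ n _ ih) n
  exact ⟨f, rfl, monotone_nat_of_le_succ fun n => hgle n _ (hfQ n), hfQ, fun n => hgR n _ (hfQ n)⟩

theorem isOpen_iUnion_of_subset_interior {X : Type*} [TopologicalSpace X] {s K : ℕ → Set X}
    (hs : Monotone s) (hK : Monotone K) (hcover : ∀ x, ∃ n, x ∈ K n)
    (h : ∀ n, s n ∩ K n ⊆ interior (s (n + 1))) :
    IsOpen (⋃ n, s n) := by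
  refine isOpen_iff_mem_nhds.2 fun x hx => ?_
  obtain ⟨n, hn⟩ := mem_iUnion.1 hx
  obtain ⟨m, hm⟩ := hcover x
  have hx' : x ∈ interior (s (max n m + 1)) :=
    h _ ⟨hs (le_max_left n m) hn, hK (le_max_right n m) hm⟩
  exact mem_of_superset (mem_interior_iff_mem_nhds.1 hx') (subset_iUnion s _)

namespace Urysohns.CU

variable {X : Type*} [TopologicalSpace X] [Preorder X] {P : Set X → Set X → Prop}

theorem monotone_approx (hP : ∀ c u, P c u → IsLowerSet u) (n : ℕ) (c : CU P) :
    Monotone (c.approx n) := by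
  induction n generalizing c with
  | zero =>
    intro x y hxy
    by_cases hy : y ∈ c.U
    · have hx : x ∉ c.Uᶜ := not_not.2 (hP _ _ c.P_C_U hxy hy)
      exact (indicator_of_notMem hx _ : c.approx 0 x = 0).trans_le (c.approx_nonneg 0 y)
    · exact (c.approx_le_one 0 x).trans (c.approx_of_notMem_U 0 hy).ge
  | succ n ih => exact fun x y hxy => midpoint_le_midpoint (ih c.left hxy) (ih c.right hxy)

theorem monotone_lim (hP : ∀ c u, P c u → IsLowerSet u) (c : CU P) : Monotone c.lim :=
  fun _ y hxy => ciSup_mono (c.bddAbove_range_approx y) fun n => monotone_approx hP n c hxy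

end Urysohns.CU

theorem exists_continuous_monotone_nonneg_eq_zero_iff {X ι : Type*} [TopologicalSpace X]
    [Preorder X] [Countable ι] {f : ι → X → ℝ} (hc : ∀ i, Continuous (f i))
    (hm : ∀ i, Monotone (f i)) (hf : ∀ i x, f i x ∈ Icc (0 : ℝ) 1) :
    ∃ g : X → ℝ, Continuous g ∧ Monotone g ∧ (∀ x, 0 ≤ g x) ∧ ∀ x, g x = 0 ↔ ∀ i, f i x = 0 := by
  obtain ⟨e, he⟩ := exists_injective_nat ι
  set w : ι → ℝ := fun i => 1 / 2 / 2 ^ e i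
  have hw : Summable w := (summable_geometric_two' 1).comp_injective he
  have hw0 : ∀ i, 0 < w i := fun i => by positivity
  have hterm0 : ∀ i x, 0 ≤ w i * f i x := fun i x => mul_nonneg (hw0 i).le (hf i x).1
  have hterm : ∀ i x, ‖w i * f i x‖ ≤ w i := fun i x => by
    rw [Real.norm_of_nonneg (hterm0 i x)]
    exact mul_le_of_le_one_right (hw0 i).le (hf i x).2
  have hsum : ∀ x, Summable fun i => w i * f i x := fun x => hw.of_norm_bounded (hterm · x)
  refine ⟨fun x => ∑' i, w i * f i x,
    continuous_tsum (fun i => continuous_const.mul (hc i)) hw hterm,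
    fun x y hxy => (hsum x).tsum_le_tsum
      (fun i => mul_le_mul_of_nonneg_left (hm i hxy) (hw0 i).le) (hsum y),
    fun x => tsum_nonneg (hterm0 · x), fun x => ?_⟩
  rw [← (hsum x).hasSum_iff, hasSum_zero_iff_of_nonneg (hterm0 · x), funext_iff]
  simp [(hw0 _).ne']

section OrderClosed

variable {X : Type*} [TopologicalSpace X] [Preorder X] [OrderClosedTopology X]

theorem IsCompact.isClosed_lowerClosure {K : Set X} (hK : IsCompact K) :
    IsClosed (lowerClosure K : Set X) := by
  have : CompactSpace K := isCompact_iff_compactSpace.1 hK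
  have hle : IsClosed {p : X × K | p.1 ≤ p.2} :=
    isClosed_le continuous_fst (continuous_subtype_val.comp continuous_snd)
  convert isClosedMap_fst_of_compactSpace _ hle using 1
  ext x
  simp [mem_lowerClosure]

theorem exists_isClosed_isLowerSet_subset_interior [LocallyCompactSpace X] {s t K : Set X}
    (hs : IsClosed s) (hs' : IsLowerSet s) (ht : IsClosed t) (ht' : IsUpperSet t)
    (hst : Disjoint s t) (hK : IsCompact K) :
    ∃ s', IsClosed s' ∧ IsLowerSet s' ∧ Disjoint s' t ∧ s ⊆ s' ∧ s ∩ K ⊆ interior s' := by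
  obtain ⟨L, hL, hsL, hLt⟩ := exists_compact_between (hK.inter_left hs) ht.isOpen_compl
    (inter_subset_left.trans hst.subset_compl_right)
  have hLt' : Disjoint (lowerClosure L : Set X) t :=
    subset_compl_iff_disjoint_right.1 (lowerClosure_min hLt ht'.compl)
  exact ⟨s ∪ lowerClosure L, hs.union hL.isClosed_lowerClosure, hs'.union (lowerClosure L).lower,
    hst.union_left hLt', subset_union_left,
    hsL.trans (interior_mono (subset_lowerClosure.trans subset_union_right))⟩

structure ClosedLowerUpper (p : Set X × Set X) : Prop where
  isClosed_fst : IsClosed p.1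
  isLowerSet_fst : IsLowerSet p.1
  isClosed_snd : IsClosed p.2
  isUpperSet_snd : IsUpperSet p.2
  disjoint : Disjoint p.1 p.2

theorem ClosedLowerUpper.exists_le_subset_interior [LocallyCompactSpace X] {p : Set X × Set X}
    (hp : ClosedLowerUpper p) {K : Set X} (hK : IsCompact K) :
    ∃ q, ClosedLowerUpper q ∧ p ≤ q ∧ p.1 ∩ K ⊆ interior q.1 ∧ p.2 ∩ K ⊆ interior q.2 := by
  obtain ⟨s, hs, hs', hst, hps, hpKs⟩ := exists_isClosed_isLowerSet_subset_interior
    hp.isClosed_fst hp.isLowerSet_fst hp.isClosed_snd hp.isUpperSet_snd hp.disjoint hK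
  obtain ⟨t, ht, ht', hts, hpt, hpKt⟩ := exists_isClosed_isLowerSet_subset_interior (X := Xᵒᵈ)
    hp.isClosed_snd hp.isUpperSet_snd hs hs' hst.symm hK
  exact ⟨(s, t), ⟨hs, hs', ht, ht', hts.symm⟩, ⟨hps, hpt⟩, hpKs, hpKt⟩

theorem exists_isOpen_isLowerSet_isUpperSet_disjoint [LocallyCompactSpace X] [SigmaCompactSpace X]
    {s t : Set X} (hs : IsClosed s) (hs' : IsLowerSet s) (ht : IsClosed t) (ht' : IsUpperSet t)
    (hst : Disjoint s t) :
    ∃ u v, IsOpen u ∧ IsLowerSet u ∧ IsOpen v ∧ IsUpperSet v ∧ s ⊆ u ∧ t ⊆ v ∧ Disjoint u v := by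
  obtain ⟨p, hp0, hmono, hp, hint⟩ := exists_monotone_seq_of_forall_exists
    (R := fun n p q => p.1 ∩ compactCovering X n ⊆ interior q.1 ∧
      p.2 ∩ compactCovering X n ⊆ interior q.2)
    (⟨hs, hs', ht, ht', hst⟩ : ClosedLowerUpper (s, t))
    fun n _ hp => hp.exists_le_subset_interior (isCompact_compactCovering X n)
  have hmono₁ : Monotone fun n => (p n).1 := fun _ _ h => (hmono h).1
  have hmono₂ : Monotone fun n => (p n).2 := fun _ _ h => (hmono h).2
  refine ⟨⋃ n, (p n).1, ⋃ n, (p n).2,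
    isOpen_iUnion_of_subset_interior hmono₁ (compactCovering_subset X) exists_mem_compactCovering
      fun n => (hint n).1,
    isLowerSet_iUnion fun n => (hp n).isLowerSet_fst,
    isOpen_iUnion_of_subset_interior hmono₂ (compactCovering_subset X) exists_mem_compactCovering
      fun n => (hint n).2,
    isUpperSet_iUnion fun n => (hp n).isUpperSet_snd,
    hp0.ge.1.trans (subset_iUnion (fun n => (p n).1) 0),
    hp0.ge.2.trans (subset_iUnion (fun n => (p n).2) 0), ?_⟩
  refine disjoint_iUnion_left.2 fun n => disjoint_iUnion_right.2 fun m => ?_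
  exact (hp (max n m)).disjoint.mono (hmono₁ (le_max_left n m)) (hmono₂ (le_max_right n m))

theorem exists_isOpen_isClosed_isLowerSet_between [LocallyCompactSpace X] [SigmaCompactSpace X]
    {s u : Set X} (hs : IsClosed s) (hs' : IsLowerSet s) (hu : IsOpen u) (hu' : IsLowerSet u)
    (hsu : s ⊆ u) :
    ∃ v F, IsOpen v ∧ IsLowerSet v ∧ IsClosed F ∧ IsLowerSet F ∧ s ⊆ v ∧ v ⊆ F ∧ F ⊆ u := by
  obtain ⟨v, w, hv, hv', hw, hw', hsv, huw, hvw⟩ := exists_isOpen_isLowerSet_isUpperSet_disjoint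
    hs hs' hu.isClosed_compl hu'.compl (disjoint_compl_right.mono_left hsu)
  exact ⟨v, wᶜ, hv, hv', hw.isClosed_compl, hw'.compl, hsv, hvw.subset_compl_right,
    compl_subset_comm.1 huw⟩

theorem exists_continuous_monotone_zero_one [LocallyCompactSpace X] [SigmaCompactSpace X]
    {s t : Set X} (hs : IsClosed s) (hs' : IsLowerSet s) (ht : IsClosed t) (ht' : IsUpperSet t)
    (hst : Disjoint s t) :
    ∃ f : X → ℝ, Continuous f ∧ Monotone f ∧ (∀ x, f x ∈ Icc (0 : ℝ) 1) ∧ EqOn f 0 s ∧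
      EqOn f 1 t := by
  -- The closure of an open lower set need not be a lower set, so rather than asking `C` to be a
  -- lower set we ask for a closed lower set between `C` and `U`.
  let c : Urysohns.CU fun C U => IsLowerSet U ∧ ∃ F, IsClosed F ∧ IsLowerSet F ∧ C ⊆ F ∧ F ⊆ U :=
    { C := s
      U := tᶜ
      P_C_U := ⟨ht'.compl, s, hs, hs', subset_rfl, hst.subset_compl_right⟩
      closed_C := hs
      open_U := ht.isOpen_compl
      subset := hst.subset_compl_right
      hP := by
        rintro C u - ⟨hu', F, hF, hF', hCF, hFu⟩ hu -
        obtain ⟨v, G, hv, hv', hG, hG', hFv, hvG, hGu⟩ :=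
          exists_isOpen_isClosed_isLowerSet_between hF hF' hu hu' hFu
        have hvG' : closure v ⊆ G := closure_minimal hvG hG
        exact ⟨v, hv, hCF.trans hFv, hvG'.trans hGu, ⟨hv', F, hF, hF', hCF, hFv⟩,
          ⟨hu', G, hG, hG', hvG', hGu⟩⟩ }
  exact ⟨c.lim, c.continuous_lim, Urysohns.CU.monotone_lim (fun _ _ h => h.1) c, c.lim_mem_Icc,
    fun x hx => c.lim_of_mem_C x hx, fun x hx => c.lim_of_notMem_U x (not_not_intro hx)⟩

theorem IsClosed.exists_monotone_preimage_zero [LocallyCompactSpace X] [SecondCountableTopology X]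
    {s : Set X} (hs : IsClosed s) (hs' : IsLowerSet s) :
    ∃ g : X → ℝ, Continuous g ∧ Monotone g ∧ (∀ x, 0 ≤ g x) ∧ g ⁻¹' {0} = s := by
  have hsep : ∀ x ∈ sᶜ, ∃ f : X → ℝ, Continuous f ∧ Monotone f ∧ (∀ y, f y ∈ Icc (0 : ℝ) 1) ∧
      EqOn f 0 s ∧ EqOn f 1 (Ici x) := fun x hx =>
    exists_continuous_monotone_zero_one hs hs' isClosed_Ici (isUpperSet_Ici x)
      (disjoint_left.2 fun y hy hxy => hx (hs' hxy hy))
  choose! f hfc hfm hf01 hf0 hf1 using hsep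
  have hnhds : ∀ x ∈ sᶜ, {y | 0 < f x y} ∈ 𝓝[sᶜ] x := fun x hx =>
    mem_nhdsWithin_of_mem_nhds <| (isOpen_lt continuous_const (hfc x hx)).mem_nhds <| by
      simp [hf1 x hx (mem_Ici.2 le_rfl)]
  obtain ⟨T, hTs, hTc, hcover⟩ := countable_cover_nhdsWithin hnhds
  have := hTc.to_subtype
  obtain ⟨g, hgc, hgm, hg0, hgf⟩ := exists_continuous_monotone_nonneg_eq_zero_iff
    (f := fun i : T => f i) (fun i => hfc i (hTs i.2)) (fun i => hfm i (hTs i.2))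
    (fun i => hf01 i (hTs i.2))
  refine ⟨g, hgc, hgm, hg0, Set.ext fun x => ?_⟩
  rw [mem_preimage, mem_singleton_iff, hgf]
  refine ⟨fun h => by_contra fun hx => ?_, fun hx i => hf0 i (hTs i.2) hx⟩
  obtain ⟨i, hiT, hi⟩ := mem_iUnion₂.1 (hcover hx)
  exact hi.ne' (h ⟨i, hiT⟩)

theorem exists_continuous_monotone_preimage_zero_one [LocallyCompactSpace X]
    [SecondCountableTopology X] {s t : Set X} (hs : IsClosed s) (hs' : IsLowerSet s)
    (ht : IsClosed t) (ht' : IsUpperSet t) (hst : Disjoint s t) :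
    ∃ τ : X → ℝ, Continuous τ ∧ (∀ x, τ x ∈ Icc (0 : ℝ) 1) ∧ Monotone τ ∧ τ ⁻¹' {0} = s ∧
      τ ⁻¹' {1} = t := by
  obtain ⟨g, hgc, hgm, hg0, hgs⟩ := hs.exists_monotone_preimage_zero hs'
  obtain ⟨h, hhc, hhm, hh0, hht⟩ := ht.exists_monotone_preimage_zero (X := Xᵒᵈ) ht'
  have hg : ∀ x, g x = 0 ↔ x ∈ s := fun x => Set.ext_iff.1 hgs x
  have hh : ∀ x, h x = 0 ↔ x ∈ t := fun x => Set.ext_iff.1 hht x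
  have hpos : ∀ x, 0 < g x + h x := fun x => by
    refine (add_nonneg (hg0 x) (hh0 x)).lt_of_ne fun hx => ?_
    obtain ⟨hgx, hhx⟩ := (add_eq_zero_iff_of_nonneg (hg0 x) (hh0 x)).1 hx.symm
    exact disjoint_left.1 hst ((hg x).1 hgx) ((hh x).1 hhx)
  refine ⟨fun x => g x / (g x + h x), hgc.div (hgc.add hhc) fun x => (hpos x).ne',
    fun x => ⟨div_nonneg (hg0 x) (hpos x).le,
      div_le_one_of_le₀ (le_add_of_nonneg_right (hh0 x)) (hpos x).le⟩,
    fun x y hxy => ?_, Set.ext fun x => ?_, Set.ext fun x => ?_⟩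
  · rw [div_le_div_iff₀ (hpos x) (hpos y)]
    have := mul_le_mul (hgm hxy) (hhm hxy) (hh0 y) (hg0 y)
    linear_combination this
  · rw [mem_preimage, mem_singleton_iff, div_eq_zero_iff, or_iff_left (hpos x).ne']
    exact hg x
  · rw [mem_preimage, mem_singleton_iff, div_eq_one_iff_eq (hpos x).ne', left_eq_add]
    exact hh x

end OrderClosed

/-- Perfectly normally ordered property for closed preorders (used in
Theorems 2.19 and 2.20): a closed past set and a disjoint closed future set
are exactly separated by a continuous isotone function with values in `[0,1]`. -/
theorem stmt12 {M : Type*} [TopologicalSpace M] [SecondCountableTopology M]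
    [LocallyCompactSpace M]
    (J : M → M → Prop) (hrefl : ∀ x, J x x)
    (htrans : ∀ x y z, J x y → J y z → J x z)
    (hclosed : IsClosed {p : M × M | J p.1 p.2})
    (A B : Set M) (hA : IsClosed A) (hB : IsClosed B)
    (hApast : ∀ x a, a ∈ A → J x a → x ∈ A)
    (hBfut : ∀ b x, b ∈ B → J b x → x ∈ B)
    (hAB : A ∩ B = ∅) :
    ∃ τ : M → ℝ, Continuous τ ∧ (∀ x, τ x ∈ Set.Icc (0:ℝ) 1) ∧
      (∀ x y, J x y → τ x ≤ τ y) ∧ τ ⁻¹' {0} = A ∧ τ ⁻¹' {1} = B := by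
  let : Preorder M := { le := J, le_refl := hrefl, le_trans := htrans }
  have : OrderClosedTopology M := ⟨hclosed⟩
  exact exists_continuous_monotone_preimage_zero_one hA (fun a x hxa ha => hApast x a ha hxa) hB
    (fun b x hbx hb => hBfut b x hb hbx) (disjoint_iff_inter_eq_empty.2 hAB)
end
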